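/- Let ψ(U) = (3/2)‖U‖_F⁴ + c‖U‖_F² with c ≥ 0, λ ≥ 0, η > 0, and let h: R^{m×r} → R be given by h(U) = (λ/2)‖U‖_F² + ⟨g, U⟩ + (1/η)D_ψ(U, V) for fixed g, V ∈ R^{m×r}. Then U is a minimizer of h if and only if (λη + 6‖U‖_F² + 2c) U = ∇ψ(V) − η g. -/

import Mathlib

open Matrix

noncomputable def finner {m r : ℕ} (A B : Matrix (Fin m) (Fin r) ℝ) : ℝ :=
  Matrix.trace (Aᵀ * B)

/-- The gradient of `ψ(U) = (3/2)‖U‖⁴ + c‖U‖²` (Frobenius norm). -/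
noncomputable def gradPsi {m r : ℕ} (c : ℝ) (V : Matrix (Fin m) (Fin r) ℝ) :
    Matrix (Fin m) (Fin r) ℝ :=
  (6 * finner V V) • V + (2 * c) • V

/-- Bregman distance generated by `ψ`. -/
noncomputable def Dpsi {m r : ℕ} (c : ℝ) (U V : Matrix (Fin m) (Fin r) ℝ) : ℝ :=
  ((3/2) * (finner U U) ^ 2 + c * finner U U)
    - ((3/2) * (finner V V) ^ 2 + c * finner V V)
    - finner (gradPsi c V) (U - V)

/-
Writing `x` for `U`, the three-point identity for Bregman distances gives
`η (h y - h x) = ⟪G, y - x⟫ + (λη/2) ‖y - x‖² + D_ψ(y, x)` with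
`G = (λη + 6‖x‖² + 2c) x - (∇ψ(V) - η g) = η ∇h(x)`, and for this quartic `ψ` the Bregman
distance has the closed form `D_ψ(y, x) = (c + 3‖x‖²) ‖y - x‖² + (3/2) (‖y‖² - ‖x‖²)² ≥ 0`.
Hence `G = 0` makes `x` a minimizer; conversely, along `y = x - t G` the first-order drop
`-t ‖G‖²` dominates the `O(t²)` remainder, so a minimizer has `G = 0`. Since the Frobenius
product is the Euclidean inner product of the vectorized matrices, only the inner product
structure of the space of matrices is involved.
-/

open RealInnerProductSpace Filter Topology

lemma nonpos_of_forall_pos_le_mul {a : ℝ} {q : ℝ → ℝ} (hq : ContinuousAt q 0)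
    (h : ∀ t > 0, a ≤ t * q t) : a ≤ 0 := by
  have hlim : Tendsto (fun t => t * q t) (𝓝[>] 0) (𝓝 0) := by
    have hcont : ContinuousAt (fun t => t * q t) 0 := continuousAt_id.mul hq
    simpa using hcont.tendsto.mono_left nhdsWithin_le_nhds
  exact ge_of_tendsto hlim (eventually_nhdsWithin_of_forall h)

section QuarticPotential

variable {E : Type*} [NormedAddCommGroup E] [InnerProductSpace ℝ E]

noncomputable def quarticPotential (c : ℝ) (x : E) : ℝ := 3 / 2 * ‖x‖ ^ 4 + c * ‖x‖ ^ 2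

noncomputable def quarticPotentialGrad (c : ℝ) (x : E) : E := (6 * ‖x‖ ^ 2 + 2 * c) • x

noncomputable def quarticBregman (c : ℝ) (x v : E) : ℝ :=
  quarticPotential c x - quarticPotential c v - ⟪quarticPotentialGrad c v, x - v⟫

lemma quarticBregman_eq (c : ℝ) (x v : E) :
    quarticBregman c x v = (c + 3 * ‖v‖ ^ 2) * ‖x - v‖ ^ 2 + 3 / 2 * (‖x‖ ^ 2 - ‖v‖ ^ 2) ^ 2 := by
  simp only [quarticBregman, quarticPotential, quarticPotentialGrad, norm_sub_sq_real,
    inner_smul_left, inner_sub_right, real_inner_self_eq_norm_sq, RCLike.conj_to_real]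
  rw [real_inner_comm v x]
  ring

lemma quarticBregman_nonneg {c : ℝ} (hc : 0 ≤ c) (x v : E) : 0 ≤ quarticBregman c x v := by
  rw [quarticBregman_eq]
  positivity

lemma quarticBregman_sub_quarticBregman (c : ℝ) (x y v : E) :
    quarticBregman c y v - quarticBregman c x v =
      quarticBregman c y x + ⟪quarticPotentialGrad c x - quarticPotentialGrad c v, y - x⟫ := by
  simp only [quarticBregman, inner_sub_left, inner_sub_right]
  ring

noncomputable def quarticProxObjective (c lam η : ℝ) (g v x : E) : ℝ :=
  lam / 2 * ‖x‖ ^ 2 + ⟪g, x⟫ + 1 / η * quarticBregman c x v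

variable {c lam η : ℝ} {g v : E}

lemma mul_quarticProxObjective_sub (hη : η ≠ 0) (x y : E) :
    η * (quarticProxObjective c lam η g v y - quarticProxObjective c lam η g v x) =
      ⟪(lam * η + 6 * ‖x‖ ^ 2 + 2 * c) • x - (quarticPotentialGrad c v - η • g), y - x⟫ +
        lam * η / 2 * ‖y - x‖ ^ 2 + quarticBregman c y x := by
  have hD := quarticBregman_sub_quarticBregman c x y v
  simp only [quarticProxObjective, quarticPotentialGrad, inner_sub_left, inner_smul_left,
    inner_sub_right, RCLike.conj_to_real, real_inner_self_eq_norm_sq, norm_sub_sq_real] at hD ⊢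
  rw [real_inner_comm x y]
  field_simp
  linear_combination 2 * hD

lemma mul_quarticProxObjective_sub_smul (hη : η ≠ 0) (x d : E) (t : ℝ) :
    η * (quarticProxObjective c lam η g v (x - t • d) - quarticProxObjective c lam η g v x) =
      -t * ⟪(lam * η + 6 * ‖x‖ ^ 2 + 2 * c) • x - (quarticPotentialGrad c v - η • g), d⟫ +
        t ^ 2 * ((lam * η / 2 + c + 3 * ‖x‖ ^ 2) * ‖d‖ ^ 2 +
          3 / 2 * (t * ‖d‖ ^ 2 - 2 * ⟪x, d⟫) ^ 2) := by
  rw [mul_quarticProxObjective_sub hη, quarticBregman_eq]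
  simp only [sub_sub_cancel_left, norm_neg, norm_smul, inner_neg_right, inner_smul_right,
    norm_sub_sq_real, Real.norm_eq_abs, mul_pow, sq_abs]
  ring

theorem forall_quarticProxObjective_le_iff (hc : 0 ≤ c) (hlam : 0 ≤ lam) (hη : 0 < η) (x : E) :
    (∀ y, quarticProxObjective c lam η g v x ≤ quarticProxObjective c lam η g v y) ↔
      (lam * η + 6 * ‖x‖ ^ 2 + 2 * c) • x = quarticPotentialGrad c v - η • g := by
  rw [← sub_eq_zero]
  constructor
  · intro hmin
    set G := (lam * η + 6 * ‖x‖ ^ 2 + 2 * c) • x - (quarticPotentialGrad c v - η • g)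
    have hstep : ∀ t > 0, ‖G‖ ^ 2 ≤ t * ((lam * η / 2 + c + 3 * ‖x‖ ^ 2) * ‖G‖ ^ 2 +
        3 / 2 * (t * ‖G‖ ^ 2 - 2 * ⟪x, G⟫) ^ 2) := by
      intro t ht
      have hdescent := mul_nonneg hη.le (sub_nonneg.mpr (hmin (x - t • G)))
      rw [mul_quarticProxObjective_sub_smul hη.ne', real_inner_self_eq_norm_sq] at hdescent
      refine le_of_mul_le_mul_left ?_ ht
      linarith
    simpa using nonpos_of_forall_pos_le_mul (by fun_prop) hstep
  · intro hG y
    have hexp := mul_quarticProxObjective_sub (c := c) (lam := lam) (g := g) (v := v) hη.ne' x y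
    rw [hG, inner_zero_left, zero_add] at hexp
    have : 0 ≤ η * (quarticProxObjective c lam η g v y - quarticProxObjective c lam η g v x) := by
      rw [hexp]
      exact add_nonneg (by positivity) (quarticBregman_nonneg hc y x)
    exact sub_nonneg.mp (nonneg_of_mul_nonneg_right this hη)

end QuarticPotential

noncomputable def Matrix.toEuclideanVec {𝕜 m n : Type*} [RCLike 𝕜] :
    Matrix m n 𝕜 ≃ₗ[𝕜] EuclideanSpace 𝕜 (n × m) where
  toFun A := WithLp.toLp 2 A.vec
  invFun x := Matrix.of fun i j => x (j, i)
  map_add' _ _ := rfl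
  map_smul' _ _ := rfl
  left_inv _ := rfl
  right_inv _ := rfl

lemma Matrix.toEuclideanVec_apply {𝕜 m n : Type*} [RCLike 𝕜] (A : Matrix m n 𝕜) :
    A.toEuclideanVec = WithLp.toLp 2 A.vec :=
  rfl

section Frobenius

variable {m r : ℕ}

lemma finner_eq_inner (A B : Matrix (Fin m) (Fin r) ℝ) :
    finner A B = ⟪A.toEuclideanVec, B.toEuclideanVec⟫ := by
  rw [toEuclideanVec_apply, toEuclideanVec_apply, EuclideanSpace.inner_toLp_toLp, star_trivial,
    dotProduct_comm, vec_dotProduct_vec, finner]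

lemma finner_self_eq_norm_sq (A : Matrix (Fin m) (Fin r) ℝ) :
    finner A A = ‖A.toEuclideanVec‖ ^ 2 := by
  rw [finner_eq_inner, real_inner_self_eq_norm_sq]

lemma toEuclideanVec_gradPsi (c : ℝ) (V : Matrix (Fin m) (Fin r) ℝ) :
    (gradPsi c V).toEuclideanVec = quarticPotentialGrad c V.toEuclideanVec := by
  simp [gradPsi, quarticPotentialGrad, finner_self_eq_norm_sq, add_smul]

lemma Dpsi_eq_quarticBregman (c : ℝ) (U V : Matrix (Fin m) (Fin r) ℝ) :
    Dpsi c U V = quarticBregman c U.toEuclideanVec V.toEuclideanVec := by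
  simp only [Dpsi, quarticBregman, quarticPotential, finner_self_eq_norm_sq, finner_eq_inner,
    toEuclideanVec_gradPsi, map_sub]
  ring

end Frobenius

theorem stmt10 (m r : ℕ) (c : ℝ) (hc : 0 ≤ c) (lam η : ℝ) (hlam : 0 ≤ lam)
    (hη : 0 < η) (g V : Matrix (Fin m) (Fin r) ℝ)
    (h : Matrix (Fin m) (Fin r) ℝ → ℝ)
    (hh : ∀ U, h U = (lam / 2) * finner U U + finner g U + (1 / η) * Dpsi c U V)
    (U : Matrix (Fin m) (Fin r) ℝ) :
    (∀ U', h U ≤ h U') ↔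
      (lam * η + 6 * finner U U + 2 * c) • U = gradPsi c V - η • g := by
  set Q := quarticProxObjective c lam η g.toEuclideanVec V.toEuclideanVec
  have hobj : ∀ U', h U' = Q U'.toEuclideanVec := fun U' => by
    rw [hh, Dpsi_eq_quarticBregman, finner_self_eq_norm_sq, finner_eq_inner]
    rfl
  simp only [hobj]
  refine (toEuclideanVec.surjective.forall (p := fun y => Q U.toEuclideanVec ≤ Q y)).symm.trans ?_
  rw [forall_quarticProxObjective_le_iff hc hlam hη, ← toEuclideanVec.injective.eq_iff,
    map_sub, map_smul, map_smul, toEuclideanVec_gradPsi, finner_self_eq_norm_sq]
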